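/- Let n be a positive integer whose length spectrum S = lspec(n) has strictly more odd elements than even elements. Then the greatest odd divisor of n equals the product of the maximum and the minimum of the difference set D(S). -/

import Mathlib

/-- The length spectrum of `n`: the set of lengths `l` of decompositions of `n`,
i.e. sequences `a, a+1, ..., a+(l-1)` of `l ≥ 1` consecutive positive integers summing to `n`. -/
def lspec (n : ℕ) : Set ℕ :=
  {l | 0 < l ∧ ∃ a : ℕ, 0 < a ∧ ∑ i ∈ Finset.range l, (a + i) = n}

/-- `A₀`: the even elements of `A`. -/
def evens (A : Set ℕ) : Set ℕ := {x ∈ A | Even x}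

/-- `A₁`: the odd elements of `A`. -/
def odds (A : Set ℕ) : Set ℕ := {x ∈ A | Odd x}

/-- The spectral class of `n`: positive integers with the same length spectrum as `n`. -/
def specClass (n : ℕ) : Set ℕ := {m | 0 < m ∧ lspec m = lspec n}

/-- A set is balanced if it has equally many even and odd elements. -/
def balancedSet (S : Set ℕ) : Prop := (evens S).encard = (odds S).encard

/-- A set is unmixed if it has no even elements. -/
def unmixedSet (S : Set ℕ) : Prop := evens S = ∅

/-- A set is lopsided if it is neither balanced nor unmixed. -/
def lopsidedSet (S : Set ℕ) : Prop := ¬ balancedSet S ∧ ¬ unmixedSet S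

/-- The set of ratios `m'/m` over pairs of complementary factors `m ≤ m'` of `k`;
`q(k)` is the least element of this set. -/
def qSet (k : ℕ) : Set ℚ :=
  {r | ∃ m m' : ℕ, 0 < m ∧ m ≤ m' ∧ m * m' = k ∧ r = (m' : ℚ) / (m : ℚ)}

/-- The exceptional set `E(S)`: numbers `a = b·c` with `b, c ∈ S₁`, `a > max S₀`, and
whose set of divisors of `(max S₁)·a` strictly below `a` is exactly `S₁`. -/
def excSet (S : Set ℕ) : Set ℕ :=
  {a | (∃ b ∈ odds S, ∃ c ∈ odds S, a = b * c) ∧ sSup (evens S) < a ∧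
    {d | d ∣ sSup (odds S) * a ∧ d < a} = odds S}

/-- `P(S)`: the primes strictly greater than `max S₀`. -/
def primesAbove (S : Set ℕ) : Set ℕ := {p | p.Prime ∧ sSup (evens S) < p}

/-- A balanced spectrum is non-excessive if `S₁` is exactly the set of divisors of `max S₁`. -/
def nonExcessive (S : Set ℕ) : Prop := odds S = {d | d ∣ sSup (odds S)}

/-- `γ_p`: the largest `k` with `p^k ∈ S₁`. -/
noncomputable def gammaIdx (S : Set ℕ) (p : ℕ) : ℕ := sSup {k | p ^ k ∈ odds S}

/-- `μ_p = v_p(max S₁)`. -/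
noncomputable def muIdx (S : Set ℕ) (p : ℕ) : ℕ := (sSup (odds S)).factorization p

/-- The excessive index `ε_p = γ_p − μ_p` of a prime `p` with respect to `S`. -/
noncomputable def excIdx (S : Set ℕ) (p : ℕ) : ℕ := gammaIdx S p - muIdx S p

/-- The difference set `D(S)`: `S₁` with its `|S₀|` smallest elements removed when
`|S₀| ≤ |S₁|`, and empty otherwise.  An element `x` of `S₁` survives exactly when at least
`|S₀|` elements of `S₁` lie strictly below it. -/
def diffSet (S : Set ℕ) : Set ℕ :=
  {x ∈ odds S | (evens S).encard ≤ {y ∈ odds S | y < x}.encard}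


/-!
Write `n = 2^v m` with `m` odd and put `P = 2^(v+1)`. A decomposition of `n` of length `l`
starting at `a` is the same as a factorization `2n = l k` with `l < k` and `l + k` odd
(`k = 2a + l - 1`). Exactly one factor is odd; it is a divisor of `m` and the other one is `P`
times the complementary divisor. Hence the odd lengths are the divisors `d ∣ m` with
`d < P (m / d)`, and the even lengths are the numbers `P e` with `e ∣ m` and `P e < m / e`.
Those `e` are themselves odd lengths and form an initial segment of `S₁`, so they are exactly
the `|S₀|` smallest odd lengths, and `D(S)` is the set of divisors `d ∣ m` with `d < P (m / d)`
and `m / d < P d`. This set is stable under `d ↦ m / d`, so its maximum times its minimum is `m`.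
-/

theorem two_mul_sum_range_succ_add (b l : ℕ) :
    2 * ∑ i ∈ Finset.range l, (b + 1 + i) = l * (2 * b + l + 1) := by
  induction l with
  | zero => simp
  | succ l ih => rw [Finset.sum_range_succ]; linarith

theorem mem_lspec_iff {n l : ℕ} :
    l ∈ lspec n ↔ 0 < l ∧ ∃ k, l < k ∧ Odd (l + k) ∧ l * k = 2 * n := by
  constructor
  · rintro ⟨hl, a, ha, rfl⟩
    obtain ⟨b, rfl⟩ := Nat.exists_eq_add_one_of_ne_zero ha.ne'
    exact ⟨hl, 2 * b + l + 1, by omega, ⟨b + l, by ring⟩,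
      (two_mul_sum_range_succ_add b l).symm⟩
  · rintro ⟨hl, k, hlk, ⟨t, ht⟩, hprod⟩
    refine ⟨hl, t - l + 1, by omega, ?_⟩
    have hsum := two_mul_sum_range_succ_add (t - l) l
    rw [show 2 * (t - l) + l + 1 = k by omega, hprod] at hsum
    omega

section OddPart

variable {n : ℕ}

theorem odd_ordCompl_two (hn : n ≠ 0) : Odd (ordCompl[2] n) :=
  Nat.not_even_iff_odd.1 fun h => Nat.not_dvd_ordCompl Nat.prime_two hn h.two_dvd

theorem mul_two_mul_ordProj_mul_div_eq {d : ℕ} (hd : d ∣ ordCompl[2] n) :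
    d * (2 * ordProj[2] n * (ordCompl[2] n / d)) = 2 * n := by
  rw [mul_left_comm, Nat.mul_div_cancel' hd, mul_assoc, Nat.ordProj_mul_ordCompl_eq_self]

theorem Odd.dvd_ordCompl_two {d : ℕ} (hd : Odd d) (hdvd : d ∣ 2 * n) : d ∣ ordCompl[2] n :=
  Nat.dvd_ordCompl_of_dvd_not_dvd ((Nat.coprime_two_right.2 hd).dvd_of_dvd_mul_left hdvd)
    hd.not_two_dvd_nat

theorem odds_lspec (hn : n ≠ 0) :
    odds (lspec n) =
      {d | d ∣ ordCompl[2] n ∧ d < 2 * ordProj[2] n * (ordCompl[2] n / d)} := by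
  ext d
  simp only [odds, Set.mem_ofPred_eq, mem_lspec_iff]
  constructor
  · rintro ⟨⟨-, k, hdk, -, hprod⟩, hd⟩
    have hdvd : d ∣ ordCompl[2] n := hd.dvd_ordCompl_two ⟨k, hprod.symm⟩
    refine ⟨hdvd, ?_⟩
    have hk : k = 2 * ordProj[2] n * (ordCompl[2] n / d) :=
      Nat.eq_of_mul_eq_mul_left hd.pos (hprod.trans (mul_two_mul_ordProj_mul_div_eq hdvd).symm)
    exact hk ▸ hdk
  · rintro ⟨hdvd, hlt⟩
    have hd : Odd d := (odd_ordCompl_two hn).of_dvd_nat hdvd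
    exact ⟨⟨hd.pos, _, hlt, hd.add_even ((even_two_mul _).mul_right _),
      mul_two_mul_ordProj_mul_div_eq hdvd⟩, hd⟩

theorem evens_lspec (hn : n ≠ 0) :
    evens (lspec n) = (2 * ordProj[2] n * ·) ''
      {e | e ∣ ordCompl[2] n ∧ 2 * ordProj[2] n * e < ordCompl[2] n / e} := by
  have hm := odd_ordCompl_two hn
  ext l
  simp only [evens, Set.mem_ofPred_eq, Set.mem_image, mem_lspec_iff]
  constructor
  · rintro ⟨⟨-, k, hlk, hodd, hprod⟩, hl⟩
    have hk : Odd k := (Nat.odd_add'.1 hodd).2 hl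
    have hdvd : k ∣ ordCompl[2] n := hk.dvd_ordCompl_two ⟨l, by rw [← hprod, mul_comm]⟩
    have hl_eq : 2 * ordProj[2] n * (ordCompl[2] n / k) = l :=
      Nat.eq_of_mul_eq_mul_left hk.pos
        ((mul_two_mul_ordProj_mul_div_eq hdvd).trans (by rw [← hprod, mul_comm]))
    refine ⟨ordCompl[2] n / k, ⟨Nat.div_dvd_of_dvd hdvd, ?_⟩, hl_eq⟩
    rwa [hl_eq, Nat.div_div_self hdvd hm.pos.ne']
  · rintro ⟨e, ⟨hdvd, hlt⟩, rfl⟩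
    have he : 0 < e := Nat.pos_of_dvd_of_pos hdvd hm.pos
    have hP : Even (2 * ordProj[2] n * e) := (even_two_mul _).mul_right _
    have hk : Odd (ordCompl[2] n / e) := hm.of_dvd_nat (Nat.div_dvd_of_dvd hdvd)
    refine ⟨⟨by positivity, _, hlt, hP.add_odd hk, ?_⟩, hP⟩
    rw [← mul_two_mul_ordProj_mul_div_eq hdvd]
    ring

end OddPart

section Divisors

variable {m P : ℕ}

theorem finite_setOf_dvd_and (hm : m ≠ 0) (p : ℕ → Prop) : {d | d ∣ m ∧ p d}.Finite :=
  (Nat.divisors m).finite_toSet.subset fun _ hd => Nat.mem_divisors.2 ⟨hd.1, hm⟩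

theorem setOf_dvd_mul_lt_div_subset (hP : 0 < P) :
    {e | e ∣ m ∧ P * e < m / e} ⊆ {d | d ∣ m ∧ d < P * (m / d)} := by
  rintro e ⟨he, hlt⟩
  exact ⟨he, calc
    e ≤ P * e := Nat.le_mul_of_pos_left e hP
    _ < m / e := hlt
    _ ≤ P * (m / e) := Nat.le_mul_of_pos_left _ hP⟩

theorem mul_lt_div_of_le (hm : m ≠ 0) {x y : ℕ} (hx : P * x < m / x) (hy : y ∣ m)
    (hyx : y ≤ x) : P * y < m / y := calc
  P * y ≤ P * x := Nat.mul_le_mul_left P hyx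
  _ < m / x := hx
  _ ≤ m / y := Nat.div_le_div_left hyx (Nat.pos_of_dvd_of_pos hy (Nat.pos_of_ne_zero hm))

theorem setOf_dvd_lt_mul_div_diff (hm : Odd m) (hP : Even P) :
    {d | d ∣ m ∧ d < P * (m / d)} \ {e | e ∣ m ∧ P * e < m / e} =
      {d | d ∣ m ∧ d < P * (m / d) ∧ m / d < P * d} := by
  ext d
  simp only [Set.mem_sdiff, Set.mem_ofPred_eq]
  constructor
  · rintro ⟨⟨hd, hlt⟩, hnot⟩
    refine ⟨hd, hlt, lt_of_le_of_ne (not_lt.1 fun h => hnot ⟨hd, h⟩) fun heq => ?_⟩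
    exact Nat.not_even_iff_odd.2 (hm.of_dvd_nat (Nat.div_dvd_of_dvd hd)) (heq ▸ hP.mul_right d)
  · rintro ⟨hd, hlt, hgt⟩
    exact ⟨⟨hd, hlt⟩, fun ⟨_, h⟩ => lt_asymm h hgt⟩

theorem div_mem_setOf_dvd_lt_mul_div (hm : m ≠ 0) {d : ℕ}
    (hd : d ∈ {d | d ∣ m ∧ d < P * (m / d) ∧ m / d < P * d}) :
    m / d ∈ {d | d ∣ m ∧ d < P * (m / d) ∧ m / d < P * d} := by
  obtain ⟨hdvd, hlt, hgt⟩ := hd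
  refine ⟨Nat.div_dvd_of_dvd hdvd, ?_, ?_⟩ <;> rwa [Nat.div_div_self hdvd hm]

theorem sSup_mul_sInf_eq_of_div_mem {F : Set ℕ} (hF : F.Finite) (hne : F.Nonempty)
    (hdvd : ∀ d ∈ F, d ∣ m) (hdiv : ∀ d ∈ F, m / d ∈ F) : sSup F * sInf F = m := by
  have hmax := hne.csSup_mem hF
  have hmin := Nat.sInf_mem hne
  apply le_antisymm
  · calc sSup F * sInf F ≤ sSup F * (m / sSup F) :=
          Nat.mul_le_mul_left _ (Nat.sInf_le (hdiv _ hmax))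
      _ = m := Nat.mul_div_cancel' (hdvd _ hmax)
  · calc m = m / sInf F * sInf F := (Nat.div_mul_cancel (hdvd _ hmin)).symm
      _ ≤ sSup F * sInf F := Nat.mul_le_mul_right _ (le_csSup hF.bddAbove (hdiv _ hmin))

end Divisors

section DiffSet

variable {S : Set ℕ}

theorem diffSet_eq_diff {C : Set ℕ} (hC : C.Finite) (hCS : C ⊆ odds S)
    (hdown : ∀ x ∈ C, ∀ y ∈ odds S, y ≤ x → y ∈ C)
    (hcard : (evens S).encard = C.encard) :
    diffSet S = odds S \ C := by
  ext x
  simp only [diffSet, Set.mem_sep_iff, Set.mem_sdiff, hcard]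
  refine and_congr_right fun hx => ⟨fun hle hxC => ?_, fun hxC => ?_⟩
  · have hss : {y ∈ odds S | y < x} ⊂ C :=
      ⟨fun y hy => hdown x hxC y hy.1 hy.2.le, fun h => lt_irrefl x (h hxC).2⟩
    exact ((hC.subset hss.1).encard_lt_encard hss).not_ge hle
  · exact Set.encard_le_encard fun y hy =>
      ⟨hCS hy, lt_of_not_ge fun hxy => hxC (hdown y hy x hx hxy)⟩

theorem diffSet_nonempty (hS : (odds S).Finite) (h : (evens S).encard < (odds S).encard) :
    (diffSet S).Nonempty := by
  have hne : (odds S).Nonempty := Set.encard_pos.1 (zero_le.trans_lt h)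
  have hx := hne.csSup_mem hS
  refine ⟨sSup (odds S), hx, ?_⟩
  have hbelow : {y ∈ odds S | y < sSup (odds S)} = odds S \ {sSup (odds S)} := by
    ext y
    simp only [Set.mem_sep_iff, Set.mem_sdiff, Set.mem_singleton_iff]
    exact and_congr_right fun hy => (le_csSup hS.bddAbove hy).lt_iff_ne
  rw [hbelow]
  rw [← Set.encard_sdiff_singleton_add_one hx] at h
  exact (ENat.lt_add_one_iff (hS.sdiff).encard_lt_top.ne).1 h

end DiffSet

theorem diffSet_lspec {n : ℕ} (hn : n ≠ 0) :
    diffSet (lspec n) = {d | d ∣ ordCompl[2] n ∧ d < 2 * ordProj[2] n * (ordCompl[2] n / d) ∧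
      ordCompl[2] n / d < 2 * ordProj[2] n * d} := by
  have hm := odd_ordCompl_two hn
  have hP : 0 < 2 * ordProj[2] n := by positivity
  rw [diffSet_eq_diff (C := {e | e ∣ ordCompl[2] n ∧ 2 * ordProj[2] n * e < ordCompl[2] n / e}),
    odds_lspec hn, setOf_dvd_lt_mul_div_diff hm (even_two_mul _)]
  · exact finite_setOf_dvd_and hm.pos.ne' _
  · rw [odds_lspec hn]
    exact setOf_dvd_mul_lt_div_subset hP
  · rw [odds_lspec hn]
    exact fun x hx y hy hyx => ⟨hy.1, mul_lt_div_of_le hm.pos.ne' hx.2 hy.1 hyx⟩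
  · rw [evens_lspec hn]
    exact (mul_right_injective₀ hP.ne').encard_image _

/-- If `lspec n` has more odd than even elements, then the greatest odd divisor of `n`
is the product of the maximum and the minimum of the difference set of `lspec n`. -/
theorem greatest_odd_factor_eq (n : ℕ) (hn : 0 < n)
    (h : (evens (lspec n)).encard < (odds (lspec n)).encard) :
    ordCompl[2] n = sSup (diffSet (lspec n)) * sInf (diffSet (lspec n)) := by
  have hm := odd_ordCompl_two hn.ne'
  have hodds : (odds (lspec n)).Finite := by
    rw [odds_lspec hn.ne']
    exact finite_setOf_dvd_and hm.pos.ne' _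
  have hne := diffSet_nonempty hodds h
  rw [diffSet_lspec hn.ne'] at hne ⊢
  exact (sSup_mul_sInf_eq_of_div_mem (finite_setOf_dvd_and hm.pos.ne' _) hne (fun d hd => hd.1)
    fun d hd => div_mem_setOf_dvd_lt_mul_div hm.pos.ne' hd).symm
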